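/- Let (X,d) be a uniformly discrete bounded geometry metric space and {φ_i : X → Y_i}_{i=1}^n a strongly embeddable family of maps. If the preimages {φ_i⁻¹(w) : w ∈ Y_i, i = 1,…,n} form an equi-coarsely embeddable family of metric spaces, then X is coarsely embeddable into Hilbert space. -/

import Mathlib

open Metric Filter
noncomputable section

/-- Uniformly discrete metric space. -/
def UniformlyDiscrete (X : Type*) [MetricSpace X] : Prop :=
  ∃ c > (0:ℝ), ∀ x y : X, x ≠ y → c ≤ dist x y

/-- Bounded geometry: uniformly finite balls. -/
def BoundedGeometry (X : Type*) [MetricSpace X] : Prop :=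
  ∀ r : ℝ, ∃ N : ℕ, ∀ x : X,
    (Metric.closedBall x r).Finite ∧ (Metric.closedBall x r).ncard ≤ N

/-- A strongly embeddable family of maps `φ i : X → Y i`. -/
def SEFamily {X : Type*} [MetricSpace X] {n : ℕ} {Y : Fin n → Type*}
    (φ : ∀ i, X → Y i) : Prop :=
  ∀ R > (0:ℝ), ∀ ε > (0:ℝ), ∃ ξ : X → lp (fun _ : (Σ i, Y i) => ℝ) 2,
    (∀ x : X, ‖ξ x‖ = 1) ∧
    (∀ x y : X, dist x y ≤ R → ‖ξ x - ξ y‖ ≤ ε) ∧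
    (∀ δ > (0:ℝ), ∃ S : ℝ, ∀ x : X,
      (∑' w : {w : Σ i, Y i // ¬ ∃ z : X, dist x z < S ∧ φ w.1 z = w.2},
        (ξ x w.1) ^ 2) ≤ δ)

/-- A coarse embedding of `X` into the Hilbert space `H`: there are nondecreasing
functions `ρ₋, ρ₊` tending to infinity controlling `‖φ x - φ y‖` by `dist x y`. -/
def IsCoarseEmbedding {X : Type*} [MetricSpace X] {H : Type*} [NormedAddCommGroup H]
    (φ : X → H) : Prop :=
  ∃ ρm ρp : ℝ → ℝ, Monotone ρm ∧ Monotone ρp ∧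
    Tendsto ρm atTop atTop ∧ Tendsto ρp atTop atTop ∧
    ∀ x y : X, ρm (dist x y) ≤ ‖φ x - φ y‖ ∧ ‖φ x - φ y‖ ≤ ρp (dist x y)

/-- `X` is coarsely embeddable into a Hilbert space. -/
def CoarselyEmbeddable (X : Type*) [MetricSpace X] : Prop :=
  ∃ (H : Type) (nH : NormedAddCommGroup H)
    (_ : @InnerProductSpace ℝ H _ nH.toSeminormedAddCommGroup) (φ : X → H),
    @IsCoarseEmbedding X _ H nH φ

/-- Witness conditions for equi-coarse embeddability of a family of subsets of `X`. -/
def EquiCEWitness {X : Type*} [MetricSpace X] {I : Type*} (A : I → Set X)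
    (H : Type*) [NormedAddCommGroup H] [InnerProductSpace ℝ H]
    (ξ : ∀ j, A j → H) (R ε : ℝ) : Prop :=
  (∀ (j : I) (x : A j), ‖ξ j x‖ = 1) ∧
  (∀ (j : I) (x y : A j), dist (x : X) (y : X) ≤ R → ‖ξ j x - ξ j y‖ ≤ ε) ∧
  (∀ δ > (0:ℝ), ∃ S : ℝ, ∀ (j : I) (x y : A j),
    S ≤ dist (x : X) (y : X) → |(inner ℝ (ξ j x) (ξ j y) : ℝ)| ≤ δ)

/-- A family of subsets of `X` is equi-coarsely embeddable. -/
def EquiCoarselyEmbeddable {X : Type*} [MetricSpace X] {I : Type*} (A : I → Set X) : Prop :=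
  ∀ R > (0:ℝ), ∀ ε > (0:ℝ),
    ∃ (H : Type) (nH : NormedAddCommGroup H)
      (iH : @InnerProductSpace ℝ H _ nH.toSeminormedAddCommGroup)
      (ξ : ∀ j, A j → H), @EquiCEWitness X _ I A H nH iH ξ R ε

/-!
Fix a scale `R` and a tolerance `ε`. Strong embeddability gives unit vectors `ξ x ∈ ℓ²(Σ i, Y i)`,
and equi-coarse embeddability gives unit maps `η w` on the fibres `A w = φ i ⁻¹' {y}` for
`w = ⟨i, y⟩`. Put `ζ x w = ξ x w • η w z`, where `z ∈ A w` is a point near `x`, after cutting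
`ξ x` down to the fibres passing near `x`; by the tail condition this loses little in norm.
For `R`-close `x, y` the chosen points `z, z'` of each relevant fibre are close, so `ζ x ≈ ζ y`;
for far apart `x, y` they are far apart, so each coordinate of `ζ x` has small inner product with
that of `ζ y`, and `‖ζ x - ζ y‖ ≥ 1`. The maps for `R = k + 1`, `ε = 2⁻ᵏ`, based at a point and
summed in `ℓ²`, form a coarse embedding: the terms with `k ≥ dist x y` are dominated by a
geometric series, and once `dist x y` is large the first `m` terms each contribute at least `1`.
-/

open scoped ENNReal

namespace lp

theorem norm_sq_eq_tsum {ι : Type*} {E : ι → Type*} [∀ i, NormedAddCommGroup (E i)]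
    (f : lp E 2) : ‖f‖ ^ 2 = ∑' i, ‖f i‖ ^ 2 := by
  simpa using lp.norm_rpow_eq_tsum (p := 2) (by norm_num) f

section Restrict

variable {W E : Type*} [NormedAddCommGroup E] {p : ℝ≥0∞}

def restrict (s : Set W) (f : lp (fun _ : W => E) p) : lp (fun _ : W => E) p :=
  ⟨s.indicator f, (lp.memℓp f).mono' (norm_indicator_le_norm_self f)⟩

theorem restrict_apply (s : Set W) (f : lp (fun _ : W => E) p) (w : W) :
    restrict s f w = s.indicator f w := rfl

theorem sub_restrict (s : Set W) (f : lp (fun _ : W => E) p) :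
    f - restrict s f = restrict sᶜ f := by
  ext1
  rw [lp.coeFn_sub, sub_eq_iff_eq_add']
  exact (Set.indicator_self_add_compl s f).symm

theorem norm_sq_restrict (s : Set W) (f : lp (fun _ : W => E) 2) :
    ‖restrict s f‖ ^ 2 = ∑' w : s, ‖f w‖ ^ 2 := by
  rw [norm_sq_eq_tsum, tsum_subtype s fun w => ‖f w‖ ^ 2]
  refine tsum_congr fun w => ?_
  by_cases hw : w ∈ s <;> simp [restrict_apply, hw]

theorem norm_sq_restrict_add_norm_sq_restrict_compl (s : Set W) (f : lp (fun _ : W => E) 2) :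
    ‖restrict s f‖ ^ 2 + ‖restrict sᶜ f‖ ^ 2 = ‖f‖ ^ 2 := by
  have hsum (t : Set W) : Summable fun w => ‖restrict t f w‖ ^ 2 := by
    simpa using (lp.memℓp (restrict t f)).summable (p := 2) (by norm_num)
  simp only [norm_sq_eq_tsum]
  rw [← (hsum s).tsum_add (hsum sᶜ)]
  refine tsum_congr fun w => ?_
  by_cases hw : w ∈ s <;> simp [restrict_apply, hw]

end Restrict

section PointwiseSMul

variable {W H : Type*} [NormedAddCommGroup H] [InnerProductSpace ℝ H]

def pointwiseSMul (a : lp (fun _ : W => ℝ) 2) (v : lp (fun _ : W => H) ∞) :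
    lp (fun _ : W => H) 2 :=
  ⟨fun w => a w • v w, ((lp.memℓp a).const_mul ‖v‖).mono' fun w => by
    rw [norm_smul, norm_mul, norm_norm, mul_comm]
    gcongr
    exact lp.norm_apply_le_norm ENNReal.top_ne_zero v w⟩

theorem pointwiseSMul_apply (a : lp (fun _ : W => ℝ) 2) (v : lp (fun _ : W => H) ∞) (w : W) :
    pointwiseSMul a v w = a w • v w := rfl

theorem norm_pointwiseSMul_le {a : lp (fun _ : W => ℝ) 2} {v : lp (fun _ : W => H) ∞} {c : ℝ}
    (hc : 0 ≤ c) (hv : ∀ w, a w ≠ 0 → ‖v w‖ ≤ c) : ‖pointwiseSMul a v‖ ≤ c * ‖a‖ := by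
  calc ‖pointwiseSMul a v‖ ≤ ‖c • a‖ := lp.norm_mono two_ne_zero fun w => by
        by_cases hw : a w = 0
        · simp [pointwiseSMul_apply, hw]
        · rw [pointwiseSMul_apply, norm_smul, lp.coeFn_smul, Pi.smul_apply, norm_smul, mul_comm,
            Real.norm_of_nonneg hc]
          exact mul_le_mul_of_nonneg_right (hv w hw) (norm_nonneg _)
    _ = c * ‖a‖ := by rw [lp.norm_const_smul two_ne_zero, Real.norm_of_nonneg hc]

theorem norm_pointwiseSMul {a : lp (fun _ : W => ℝ) 2} {v : lp (fun _ : W => H) ∞}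
    (hv : ∀ w, a w ≠ 0 → ‖v w‖ = 1) : ‖pointwiseSMul a v‖ = ‖a‖ := by
  have h (w : W) : ‖pointwiseSMul a v w‖ = ‖a w‖ := by
    by_cases hw : a w = 0
    · simp [pointwiseSMul_apply, hw]
    · rw [pointwiseSMul_apply, norm_smul, hv w hw, mul_one]
  exact le_antisymm (lp.norm_mono two_ne_zero fun w => (h w).le)
    (lp.norm_mono two_ne_zero fun w => (h w).ge)

theorem norm_pointwiseSMul_sub_le (a b : lp (fun _ : W => ℝ) 2) {v v' : lp (fun _ : W => H) ∞}
    {ε : ℝ} (hε : 0 ≤ ε) (hv : ∀ w, ‖v w‖ ≤ 1) (hvv' : ∀ w, b w ≠ 0 → ‖v w - v' w‖ ≤ ε) :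
    ‖pointwiseSMul a v - pointwiseSMul b v'‖ ≤ ‖a - b‖ + ε * ‖b‖ := by
  have hsplit : pointwiseSMul a v - pointwiseSMul b v' =
      pointwiseSMul (a - b) v + pointwiseSMul b (v - v') := by
    ext1; funext w
    simp only [lp.coeFn_sub, lp.coeFn_add, Pi.sub_apply, Pi.add_apply, pointwiseSMul_apply,
      sub_smul, smul_sub]
    abel
  rw [hsplit]
  refine (norm_add_le _ _).trans (add_le_add ?_ (norm_pointwiseSMul_le hε hvv'))
  simpa using norm_pointwiseSMul_le zero_le_one fun w _ => hv w

theorem inner_pointwiseSMul_le {a b : lp (fun _ : W => ℝ) 2} {v v' : lp (fun _ : W => H) ∞}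
    {c : ℝ} (hc : 0 ≤ c) (hvv' : ∀ w, a w ≠ 0 → b w ≠ 0 → |inner ℝ (v w) (v' w)| ≤ c) :
    inner ℝ (pointwiseSMul a v) (pointwiseSMul b v') ≤ c * (‖a‖ * ‖b‖) := by
  have hHolder : (2 : ℝ≥0∞).toReal.HolderConjugate (2 : ℝ≥0∞).toReal := by
    simpa using Real.HolderConjugate.two_two
  have hpoint (w : W) :
      inner ℝ (pointwiseSMul a v w) (pointwiseSMul b v' w) ≤ c * (‖a w‖ * ‖b w‖) := by
    rw [pointwiseSMul_apply, pointwiseSMul_apply, real_inner_smul_left, real_inner_smul_right]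
    by_cases ha : a w = 0
    · simp [ha]
    by_cases hb : b w = 0
    · simp [hb]
    calc a w * (b w * inner ℝ (v w) (v' w)) ≤ |a w * (b w * inner ℝ (v w) (v' w))| :=
          le_abs_self _
      _ = ‖a w‖ * ‖b w‖ * |inner ℝ (v w) (v' w)| := by
          simp only [abs_mul, Real.norm_eq_abs]; ring
      _ ≤ ‖a w‖ * ‖b w‖ * c := by gcongr; exact hvv' w ha hb
      _ = c * (‖a w‖ * ‖b w‖) := mul_comm _ _
  rw [lp.inner_eq_tsum]
  calc ∑' w, inner ℝ (pointwiseSMul a v w) (pointwiseSMul b v' w)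
      ≤ ∑' w, c * (‖a w‖ * ‖b w‖) :=
        (lp.summable_inner _ _).tsum_le_tsum hpoint ((lp.summable_mul hHolder a b).mul_left c)
    _ ≤ c * (‖a‖ * ‖b‖) := by
      rw [tsum_mul_left]
      exact mul_le_mul_of_nonneg_left (lp.tsum_mul_le_mul_norm' hHolder a b) hc

end PointwiseSMul

end lp

theorem memℓp_two_of_summable {ι : Type*} {E : ι → Type*} [∀ i, NormedAddCommGroup (E i)]
    {f : ∀ i, E i} (hf : Summable fun i => ‖f i‖ ^ 2) : Memℓp f 2 :=
  memℓp_gen (by simpa using hf)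

section CoarseEmbedding

variable {X H : Type*} [MetricSpace X] [NormedAddCommGroup H]

theorem isCoarseEmbedding_of_bornologous_of_effectivelyProper (f : X → H)
    (hbdd : ∀ R, ∃ M, ∀ x y, dist x y ≤ R → ‖f x - f y‖ ≤ M)
    (hproper : ∀ M, ∃ T, ∀ x y, T ≤ dist x y → M ≤ ‖f x - f y‖) :
    IsCoarseEmbedding f := by
  -- `insert t` keeps both sets nonempty, away from the junk values `sInf ∅ = sSup ∅ = 0`.
  let far (t : ℝ) : Set ℝ := insert t {r | ∃ x y, t ≤ dist x y ∧ ‖f x - f y‖ = r}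
  let near (t : ℝ) : Set ℝ := insert t {r | ∃ x y, dist x y ≤ t ∧ ‖f x - f y‖ = r}
  have far_bdd (t : ℝ) : BddBelow (far t) := by
    refine ⟨min t 0, ?_⟩
    rintro r (rfl | ⟨x, y, -, rfl⟩)
    exacts [min_le_left _ _, (min_le_right _ _).trans (norm_nonneg _)]
  have near_bdd (t : ℝ) : BddAbove (near t) := by
    obtain ⟨M, hM⟩ := hbdd t
    refine ⟨max t M, ?_⟩
    rintro r (rfl | ⟨x, y, hxy, rfl⟩)
    exacts [le_max_left _ _, (hM x y hxy).trans (le_max_right _ _)]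
  refine ⟨fun t => sInf (far t), fun t => sSup (near t), ?_, ?_, ?_, ?_, fun x y => ⟨?_, ?_⟩⟩
  · intro s t hst
    refine le_csInf (Set.insert_nonempty _ _) ?_
    rintro r (rfl | ⟨x, y, hxy, rfl⟩)
    · exact (csInf_le (far_bdd s) (Set.mem_insert s _)).trans hst
    · exact csInf_le (far_bdd s) (Or.inr ⟨x, y, hst.trans hxy, rfl⟩)
  · intro s t hst
    refine csSup_le (Set.insert_nonempty _ _) ?_
    rintro r (rfl | ⟨x, y, hxy, rfl⟩)
    · exact hst.trans (le_csSup (near_bdd t) (Set.mem_insert t _))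
    · exact le_csSup (near_bdd t) (Or.inr ⟨x, y, hxy.trans hst, rfl⟩)
  · refine tendsto_atTop_atTop.2 fun M => ?_
    obtain ⟨T, hT⟩ := hproper M
    refine ⟨max M T, fun t ht => le_csInf (Set.insert_nonempty _ _) ?_⟩
    rintro r (rfl | ⟨x, y, hxy, rfl⟩)
    · exact (le_max_left _ _).trans ht
    · exact hT x y (((le_max_right _ _).trans ht).trans hxy)
  · exact tendsto_atTop_mono (fun t => le_csSup (near_bdd t) (Set.mem_insert t _))
      tendsto_id
  · exact csInf_le (far_bdd _) (Or.inr ⟨x, y, le_rfl, rfl⟩)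
  · exact le_csSup (near_bdd _) (Or.inr ⟨x, y, le_rfl, rfl⟩)

end CoarseEmbedding

structure ScaleEmbedding (X : Type) [MetricSpace X] (R ε : ℝ) where
  H : Type
  [normedAddCommGroup : NormedAddCommGroup H]
  [innerProductSpace : InnerProductSpace ℝ H]
  f : X → H
  norm_le_one : ∀ x, ‖f x‖ ≤ 1
  norm_sub_le_of_dist_le : ∀ x y, dist x y ≤ R → ‖f x - f y‖ ≤ ε
  farDist : ℝ
  one_le_norm_sub_of_le_dist : ∀ x y, farDist ≤ dist x y → 1 ≤ ‖f x - f y‖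

attribute [instance] ScaleEmbedding.normedAddCommGroup ScaleEmbedding.innerProductSpace

namespace ScaleEmbedding

variable {X : Type} [MetricSpace X] (F : ∀ k : ℕ, ScaleEmbedding X (k + 1) ((1 / 2) ^ k))

def majorant (N k : ℕ) : ℝ := if k < N then 4 else (1 / 4) ^ k

theorem summable_majorant (N : ℕ) : Summable (majorant N) := by
  refine Summable.of_norm_bounded_eventually_nat
    (summable_geometric_of_lt_one (by norm_num) (by norm_num : (1 / 4 : ℝ) < 1)) ?_
  filter_upwards [eventually_ge_atTop N] with k hk
  simp [majorant, not_lt.2 hk]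

theorem sq_norm_sub_le_majorant {x y : X} {N : ℕ} (hN : dist x y ≤ N) (k : ℕ) :
    ‖(F k).f x - (F k).f y‖ ^ 2 ≤ majorant N k := by
  unfold majorant
  split_ifs with hk
  · have h2 : ‖(F k).f x - (F k).f y‖ ≤ 2 :=
      (norm_sub_le _ _).trans (by linarith [(F k).norm_le_one x, (F k).norm_le_one y])
    nlinarith [norm_nonneg ((F k).f x - (F k).f y)]
  · have hd : dist x y ≤ (k : ℝ) + 1 := hN.trans (by exact_mod_cast (not_lt.1 hk).trans k.le_succ)
    calc ‖(F k).f x - (F k).f y‖ ^ 2 ≤ ((1 / 2) ^ k) ^ 2 :=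
          pow_le_pow_left₀ (norm_nonneg _) ((F k).norm_sub_le_of_dist_le x y hd) 2
      _ = (1 / 4) ^ k := by rw [← pow_mul, mul_comm, pow_mul]; norm_num

theorem summable_sq_norm_sub (x y : X) : Summable fun k => ‖(F k).f x - (F k).f y‖ ^ 2 :=
  (summable_majorant _).of_nonneg_of_le (fun _ => sq_nonneg _)
    (sq_norm_sub_le_majorant F (Nat.le_ceil _))

def glue (x₀ : X) (x : X) : lp (fun k => (F k).H) 2 :=
  ⟨fun k => (F k).f x - (F k).f x₀, memℓp_two_of_summable (summable_sq_norm_sub F x x₀)⟩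

theorem sq_norm_glue_sub (x₀ x y : X) :
    ‖glue F x₀ x - glue F x₀ y‖ ^ 2 = ∑' k, ‖(F k).f x - (F k).f y‖ ^ 2 := by
  rw [lp.norm_sq_eq_tsum]
  congr! 3 with k
  simp only [glue, lp.coeFn_sub, Pi.sub_apply, sub_sub_sub_cancel_right]

theorem isCoarseEmbedding_glue (x₀ : X) : IsCoarseEmbedding (glue F x₀) := by
  refine isCoarseEmbedding_of_bornologous_of_effectivelyProper _ (fun R => ?_) (fun M => ?_)
  · refine ⟨√(∑' k, majorant ⌈R⌉₊ k), fun x y hxy => Real.le_sqrt_of_sq_le ?_⟩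
    rw [sq_norm_glue_sub]
    exact (summable_sq_norm_sub F x y).tsum_le_tsum
      (sq_norm_sub_le_majorant F (hxy.trans (Nat.le_ceil R))) (summable_majorant _)
  · let m := ⌈M ^ 2⌉₊
    refine ⟨(Finset.range (m + 1)).sup' Finset.nonempty_range_add_one fun k => (F k).farDist,
      fun x y hxy => ?_⟩
    refine abs_le_of_sq_le_sq ?_ (norm_nonneg _) |>.trans' (le_abs_self M)
    calc M ^ 2 ≤ m := Nat.le_ceil _
      _ ≤ ∑ k ∈ Finset.range (m + 1), (1 : ℝ) := by simp
      _ ≤ ∑ k ∈ Finset.range (m + 1), ‖(F k).f x - (F k).f y‖ ^ 2 := by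
        refine Finset.sum_le_sum fun k hk => ?_
        have := (F k).one_le_norm_sub_of_le_dist x y ((Finset.le_sup' _ hk).trans hxy)
        nlinarith
      _ ≤ ‖glue F x₀ x - glue F x₀ y‖ ^ 2 := by
        rw [sq_norm_glue_sub]
        exact (summable_sq_norm_sub F x y).sum_le_tsum _ fun _ _ => sq_nonneg _

end ScaleEmbedding

theorem coarselyEmbeddable_of_scaleEmbedding {X : Type} [MetricSpace X]
    (h : ∀ R > 0, ∀ ε > 0, Nonempty (ScaleEmbedding X R ε)) : CoarselyEmbeddable X := by
  rcases isEmpty_or_nonempty X with hX | ⟨⟨x₀⟩⟩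
  · exact ⟨ℝ, inferInstance, inferInstance, isEmptyElim, id, id, monotone_id, monotone_id,
      tendsto_id, tendsto_id, isEmptyElim⟩
  · let F (k : ℕ) := (h (k + 1) (by positivity) ((1 / 2) ^ k) (by positivity)).some
    exact ⟨_, _, inferInstance, _, ScaleEmbedding.isCoarseEmbedding_glue F x₀⟩

section NearValue

variable {X W H : Type*} [MetricSpace X] (A : W → Set X)

/- For the fibres `A w = φ w.1 ⁻¹' {w.2}`, the complement of `nearIndices A S x` is, up to
definitional unfolding, the index set of the tail sum in `SEFamily`. -/
def nearIndices (S : ℝ) (x : X) : Set W := {w | ∃ z, dist x z < S ∧ z ∈ A w}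

variable {A}

theorem nearIndices_mono {S S' : ℝ} (h : S ≤ S') (x : X) :
    nearIndices A S x ⊆ nearIndices A S' x :=
  fun _ ⟨z, hz, hzw⟩ => ⟨z, hz.trans_le h, hzw⟩

theorem mem_nearIndices_of_dist_le {S S' R : ℝ} {x y : X} {w : W} (hw : w ∈ nearIndices A S y)
    (hxy : dist x y ≤ R) (hS' : S + R ≤ S') : w ∈ nearIndices A S' x := by
  obtain ⟨z, hz, hzw⟩ := hw
  refine ⟨z, ?_, hzw⟩
  linarith [dist_triangle x y z]

variable [NormedAddCommGroup H] (A) (η : ∀ w, A w → H)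

open Classical in
def nearValue (r : ℝ) (x : X) (w : W) : H :=
  if h : w ∈ nearIndices A r x then η w ⟨h.choose, h.choose_spec.2⟩ else 0

variable {A η}

theorem exists_nearValue_eq {r : ℝ} {x : X} {w : W} (h : w ∈ nearIndices A r x) :
    ∃ z : A w, dist x z < r ∧ nearValue A η r x w = η w z :=
  ⟨⟨h.choose, h.choose_spec.2⟩, h.choose_spec.1, dif_pos h⟩

theorem exists_nearValue_eq_pair {r : ℝ} {x y : X} {w : W} (hx : w ∈ nearIndices A r x)
    (hy : w ∈ nearIndices A r y) :
    ∃ z z' : A w, dist (dist (z : X) z') (dist x y) ≤ 2 * r ∧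
      nearValue A η r x w = η w z ∧ nearValue A η r y w = η w z' := by
  obtain ⟨z, hz, hxz⟩ := exists_nearValue_eq (η := η) hx
  obtain ⟨z', hz', hyz'⟩ := exists_nearValue_eq (η := η) hy
  refine ⟨z, z', ?_, hxz, hyz'⟩
  linarith [dist_dist_dist_le (z : X) z' x y, dist_comm (z : X) x, dist_comm (z' : X) y]

theorem norm_nearValue_le (hη : ∀ w z, ‖η w z‖ = 1) (r : ℝ) (x : X) (w : W) :
    ‖nearValue A η r x w‖ ≤ 1 := by
  unfold nearValue
  split_ifs
  exacts [(hη _ _).le, by simp]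

theorem norm_nearValue_of_mem (hη : ∀ w z, ‖η w z‖ = 1) {r : ℝ} {x : X} {w : W}
    (h : w ∈ nearIndices A r x) : ‖nearValue A η r x w‖ = 1 := by
  obtain ⟨z, -, hz⟩ := exists_nearValue_eq (η := η) h
  rw [hz, hη]

variable (A η)

def nearSection (hη : ∀ w z, ‖η w z‖ = 1) (r : ℝ) (x : X) : lp (fun _ : W => H) ∞ :=
  ⟨nearValue A η r x, memℓp_infty ⟨1, by rintro _ ⟨w, rfl⟩; exact norm_nearValue_le hη r x w⟩⟩

end NearValue

section TwistedEmbedding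

variable {X W H : Type*} [MetricSpace X] [NormedAddCommGroup H] [InnerProductSpace ℝ H]
  (A : W → Set X) (ξ : X → lp (fun _ : W => ℝ) 2) (η : ∀ w, A w → H) (hη : ∀ w z, ‖η w z‖ = 1)
  (S r : ℝ)

def twistedEmbedding (x : X) : lp (fun _ : W => H) 2 :=
  lp.pointwiseSMul (lp.restrict (nearIndices A S x) (ξ x)) (nearSection A η hη r x)

variable {A ξ η hη S r}

theorem mem_nearIndices_of_restrict_ne_zero {x : X} {w : W}
    (hw : lp.restrict (nearIndices A S x) (ξ x) w ≠ 0) : w ∈ nearIndices A S x := by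
  by_contra h
  exact hw (Set.indicator_of_notMem h _)

theorem norm_twistedEmbedding (hSr : S ≤ r) (x : X) :
    ‖twistedEmbedding A ξ η hη S r x‖ = ‖lp.restrict (nearIndices A S x) (ξ x)‖ :=
  lp.norm_pointwiseSMul fun _ hw =>
    norm_nearValue_of_mem hη (nearIndices_mono hSr x (mem_nearIndices_of_restrict_ne_zero hw))

theorem norm_twistedEmbedding_sub_le {R ε : ℝ} (hε : 0 ≤ ε) (hSr : S + R ≤ r)
    (hη_close : ∀ w (z z' : A w), dist (z : X) z' ≤ R + 2 * r → ‖η w z - η w z'‖ ≤ ε)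
    {x y : X} (hxy : dist x y ≤ R) :
    ‖twistedEmbedding A ξ η hη S r x - twistedEmbedding A ξ η hη S r y‖ ≤
      ‖lp.restrict (nearIndices A S x) (ξ x) - lp.restrict (nearIndices A S y) (ξ y)‖ +
        ε * ‖lp.restrict (nearIndices A S y) (ξ y)‖ := by
  refine lp.norm_pointwiseSMul_sub_le _ _ hε (norm_nearValue_le hη r x) fun w hw => ?_
  have hy := mem_nearIndices_of_restrict_ne_zero hw
  have hR : 0 ≤ R := dist_nonneg.trans hxy
  obtain ⟨z, z', hzz', hz, hz'⟩ := exists_nearValue_eq_pair (η := η)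
    (mem_nearIndices_of_dist_le hy hxy hSr) (nearIndices_mono (by linarith) y hy)
  change ‖nearValue A η r x w - nearValue A η r y w‖ ≤ ε
  rw [hz, hz']
  refine hη_close w z z' ?_
  linarith [le_abs_self (dist (z : X) z' - dist x y), Real.dist_eq (dist (z : X) z') (dist x y)]

theorem inner_twistedEmbedding_le {T c : ℝ} (hc : 0 ≤ c) (hSr : S ≤ r)
    (hη_far : ∀ w (z z' : A w), T ≤ dist (z : X) z' → |inner ℝ (η w z) (η w z')| ≤ c)
    {x y : X} (hxy : T + 2 * r ≤ dist x y) :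
    inner ℝ (twistedEmbedding A ξ η hη S r x) (twistedEmbedding A ξ η hη S r y) ≤
      c * (‖lp.restrict (nearIndices A S x) (ξ x)‖ * ‖lp.restrict (nearIndices A S y) (ξ y)‖) := by
  refine lp.inner_pointwiseSMul_le hc fun w hx hy => ?_
  obtain ⟨z, z', hzz', hz, hz'⟩ := exists_nearValue_eq_pair (η := η)
    (nearIndices_mono hSr x (mem_nearIndices_of_restrict_ne_zero hx))
    (nearIndices_mono hSr y (mem_nearIndices_of_restrict_ne_zero hy))
  change |inner ℝ (nearValue A η r x w) (nearValue A η r y w)| ≤ c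
  rw [hz, hz']
  refine hη_far w z z' ?_
  linarith [neg_abs_le (dist (z : X) z' - dist x y), Real.dist_eq (dist (z : X) z') (dist x y)]

end TwistedEmbedding

theorem SEFamily.exists_near_approx {X : Type} [MetricSpace X] {n : ℕ} {Y : Fin n → Type}
    {φ : ∀ i, X → Y i} (hse : SEFamily φ) {R ε δ : ℝ} (hR : 0 < R) (hε : 0 < ε) (hδ : 0 < δ) :
    ∃ (ξ : X → lp (fun _ : Σ i, Y i => ℝ) 2) (S : ℝ), (∀ x, ‖ξ x‖ = 1) ∧
      (∀ x y, dist x y ≤ R → ‖ξ x - ξ y‖ ≤ ε) ∧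
      ∀ x, ‖ξ x - lp.restrict (nearIndices (fun p => φ p.1 ⁻¹' {p.2}) S x) (ξ x)‖ ≤ δ := by
  obtain ⟨ξ, hξ_norm, hξ_close, hξ_tail⟩ := hse R hR ε hε
  obtain ⟨S, hS⟩ := hξ_tail (δ ^ 2) (by positivity)
  refine ⟨ξ, S, hξ_norm, hξ_close, fun x => ?_⟩
  refine abs_le_of_sq_le_sq ?_ hδ.le |>.trans' (le_abs_self _)
  rw [lp.sub_restrict, lp.norm_sq_restrict]
  simp only [Real.norm_eq_abs, sq_abs]
  exact hS x

theorem SEFamily.nonempty_scaleEmbedding {X : Type} [MetricSpace X] {n : ℕ} {Y : Fin n → Type}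
    {φ : ∀ i, X → Y i} (hse : SEFamily φ)
    (hequi : EquiCoarselyEmbeddable (fun p : Σ i, Y i => φ p.1 ⁻¹' {p.2}))
    {R ε : ℝ} (hR : 0 < R) (hε : 0 < ε) : Nonempty (ScaleEmbedding X R ε) := by
  set A := fun p : Σ i, Y i => φ p.1 ⁻¹' {p.2}
  -- Nearby points: `ε = δ + ε / 4 + δ + ε / 4`; far points: `δ ≤ 1 / 2` keeps `‖ζ x‖ ^ 2 ≥ 3 / 4`.
  set δ := min (ε / 4) (1 / 2)
  obtain ⟨ξ, S, hξ_norm, hξ_close, ha_tail⟩ :=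
    hse.exists_near_approx hR (by positivity : 0 < ε / 4) (by positivity : 0 < δ)
  set r := max S 0 + R
  have hSRr : S + R ≤ r := by simp [r]
  have hSr : S ≤ r := by linarith
  have hRr : R ≤ r := by simp [r]
  obtain ⟨H, _, _, η, hη_norm, hη_close, hη_far⟩ := hequi (3 * r) (by positivity) (ε / 4)
    (by positivity)
  obtain ⟨T, hT⟩ := hη_far (1 / 4) (by norm_num)
  let a x := lp.restrict (nearIndices A S x) (ξ x)
  let ζ := twistedEmbedding A ξ η hη_norm S r
  have ha_sq x : ‖a x‖ ^ 2 + ‖ξ x - a x‖ ^ 2 = 1 := by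
    rw [lp.sub_restrict, lp.norm_sq_restrict_add_norm_sq_restrict_compl, hξ_norm, one_pow]
  have ha_le x : ‖a x‖ ≤ 1 := by
    nlinarith [ha_sq x, norm_nonneg (a x), sq_nonneg ‖ξ x - a x‖]
  refine ⟨⟨_, ζ, fun x => (norm_twistedEmbedding hSr x).trans_le (ha_le x), fun x y hxy => ?_,
    T + 2 * r, fun x y hxy => ?_⟩⟩
  · have ha_close : ‖a x - a y‖ ≤ ‖a x - ξ x‖ + ‖ξ x - ξ y‖ + ‖ξ y - a y‖ := by
      simpa only [dist_eq_norm] using dist_triangle4 (a x) (ξ x) (ξ y) (a y)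
    calc ‖ζ x - ζ y‖ ≤ ‖a x - a y‖ + ε / 4 * ‖a y‖ :=
          norm_twistedEmbedding_sub_le (by positivity) hSRr
            (fun w z z' h => hη_close w z z' (by linarith)) hxy
      _ ≤ (δ + ε / 4 + δ) + ε / 4 * 1 := by
          gcongr
          · linarith [hξ_close x y hxy, norm_sub_rev (a x) (ξ x), ha_tail x, ha_tail y]
          · exact ha_le y
      _ ≤ ε := by linarith [min_le_left (ε / 4) (1 / 2)]
  · have hinner : inner ℝ (ζ x) (ζ y) ≤ 1 / 4 :=
      (inner_twistedEmbedding_le (by norm_num) hSr hT hxy).trans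
        (by nlinarith [mul_le_one₀ (ha_le x) (norm_nonneg _) (ha_le y)])
    have hδ2 : δ ^ 2 ≤ (1 / 2) ^ 2 :=
      pow_le_pow_left₀ (by positivity) (min_le_right (ε / 4) (1 / 2)) 2
    have hsq : 1 ≤ ‖ζ x - ζ y‖ ^ 2 := by
      rw [norm_sub_sq_real, norm_twistedEmbedding hSr, norm_twistedEmbedding hSr]
      nlinarith [ha_sq x, ha_sq y, ha_tail x, ha_tail y, norm_nonneg (ξ x - a x),
        norm_nonneg (ξ y - a y)]
    exact (one_le_sq_iff₀ (norm_nonneg _)).1 hsq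

theorem coarselyEmbeddable_of_seFamily_general (X : Type) [MetricSpace X]
    {n : ℕ} {Y : Fin n → Type} (φ : ∀ i, X → Y i)
    (hse : SEFamily φ)
    (hequi : EquiCoarselyEmbeddable (fun p : Σ i, Y i => φ p.1 ⁻¹' {p.2})) :
    CoarselyEmbeddable X :=
  coarselyEmbeddable_of_scaleEmbedding fun _ hR _ hε => hse.nonempty_scaleEmbedding hequi hR hε

/-- If `{φ i}` is a strongly embeddable family of maps and the preimages form an
equi-coarsely embeddable family of metric spaces, then `X` is coarsely embeddable. -/
theorem coarselyEmbeddable_of_seFamily (X : Type) [MetricSpace X]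
    (hud : UniformlyDiscrete X) (hbg : BoundedGeometry X)
    {n : ℕ} {Y : Fin n → Type} (φ : ∀ i, X → Y i)
    (hse : SEFamily φ)
    (hequi : EquiCoarselyEmbeddable (fun p : Σ i, Y i => φ p.1 ⁻¹' {p.2})) :
    CoarselyEmbeddable X :=
  coarselyEmbeddable_of_seFamily_general X φ hse hequi

end
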